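/- Upper and lower bounds for posterior vulnerability with respect to hidden choice: let C₁ : X×Y₁ → ℝ and C₂ : X×Y₂ → ℝ be compatible channels, π a prior on X, g a gain function, and p ∈ [0,1]. Then V_g[π, C₁ ⊕_p C₂] ≥ max( p·V_g[π,C₁], (1−p)·V_g[π,C₂] ), and V_g[π, C₁ ⊕_p C₂] ≤ p·V_g[π,C₁] + (1−p)·V_g[π,C₂]. -/

import Mathlib

open Finset

/-- A channel with input set `X` and output set `Y`: entries are nonnegative
and each row sums to `1`. -/
def IsChannel {X Y : Type*} [Fintype Y] (C : X → Y → ℝ) : Prop :=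
  (∀ x y, 0 ≤ C x y) ∧ ∀ x, ∑ y, C x y = 1

/-- A channel with input set `X` whose output set is the finset `S` of a common
ambient type `Ω`: entries are nonnegative, each row sums to `1` over `S`, and
entries vanish outside `S`. -/
def IsChannelOn {X Ω : Type*} (S : Finset Ω) (C : X → Ω → ℝ) : Prop :=
  (∀ x y, 0 ≤ C x y) ∧ (∀ x, ∑ y ∈ S, C x y = 1) ∧ ∀ x y, y ∉ S → C x y = 0

/-- Parallel composition `C₁ ∥ C₂`. -/
def par {X Y₁ Y₂ : Type*} (C₁ : X → Y₁ → ℝ) (C₂ : X → Y₂ → ℝ) : X → Y₁ × Y₂ → ℝ :=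
  fun x y => C₁ x y.1 * C₂ x y.2

/-- Visible choice `C₁ ⊞_p C₂`, on the disjoint union of the output sets. -/
def vis {X Y₁ Y₂ : Type*} (p : ℝ) (C₁ : X → Y₁ → ℝ) (C₂ : X → Y₂ → ℝ) : X → Y₁ ⊕ Y₂ → ℝ :=
  fun x => Sum.elim (fun y => p * C₁ x y) (fun y => (1 - p) * C₂ x y)

/-- Hidden choice `C₁ ⊕_p C₂` for channels whose output sets lie in a common
ambient type (pointwise convex combination; this agrees with the case analysis
on `Y₁ ∩ Y₂`, `Y₁ \ Y₂`, `Y₂ \ Y₁` since channels vanish outside their output sets). -/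
def hid {X Ω : Type*} (p : ℝ) (C₁ C₂ : X → Ω → ℝ) : X → Ω → ℝ :=
  fun x y => p * C₁ x y + (1 - p) * C₂ x y

/-- Equality up to a permutation of the output set, `C₁ ≐ C₂`. -/
def PermEq {X Y₁ Y₂ : Type*} (C₁ : X → Y₁ → ℝ) (C₂ : X → Y₂ → ℝ) : Prop :=
  ∃ ψ : Y₁ ≃ Y₂, ∀ x y, C₁ x y = C₂ x (ψ y)

/-- Cascading `CD` of channels. -/
def cascade {X Y Z : Type*} [Fintype Y] (C : X → Y → ℝ) (D : Y → Z → ℝ) : X → Z → ℝ :=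
  fun x z => ∑ y, C x y * D y z

/-- `Refines C₁ C₂` (written `C₁ ⊑ C₂`): there is a channel `D` with `C₁D = C₂`. -/
def Refines {X Y₁ Y₂ : Type*} [Fintype Y₁] [Fintype Y₂] (C₁ : X → Y₁ → ℝ)
    (C₂ : X → Y₂ → ℝ) : Prop :=
  ∃ D : Y₁ → Y₂ → ℝ, IsChannel D ∧ cascade C₁ D = C₂

/-- Equivalence of channels: mutual refinement. -/
def EquivCh {X Y₁ Y₂ : Type*} [Fintype Y₁] [Fintype Y₂] (C₁ : X → Y₁ → ℝ)
    (C₂ : X → Y₂ → ℝ) : Prop :=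
  Refines C₁ C₂ ∧ Refines C₂ C₁

/-- A prior: a probability distribution on the finite input set `X`. -/
def IsPrior {X : Type*} [Fintype X] (π : X → ℝ) : Prop :=
  (∀ x, 0 ≤ π x) ∧ ∑ x, π x = 1

/-- A gain function `g : W × X → [0,1]`. -/
def IsGain {W X : Type*} (g : W → X → ℝ) : Prop :=
  ∀ w x, 0 ≤ g w x ∧ g w x ≤ 1

/-- Posterior g-vulnerability `V_g[π, C]`. -/
noncomputable def postV {W X Y : Type*} [Fintype W] [Nonempty W] [Fintype X] [Fintype Y]
    (π : X → ℝ) (g : W → X → ℝ) (C : X → Y → ℝ) : ℝ :=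
  ∑ y, univ.sup' univ_nonempty fun w => ∑ x, C x y * π x * g w x

/-! `V_g[π, ·]` is monotone, positively homogeneous and subadditive in the channel, and
`C₁ ⊕_p C₂ = p • C₁ + (1 - p) • C₂` lies above each of its two (nonnegative) summands. -/

section PostVulnerability

variable {W X Y : Type*} [Fintype W] [Nonempty W] [Fintype X] [Fintype Y]

theorem postV_smul (π : X → ℝ) (g : W → X → ℝ) (C : X → Y → ℝ) {c : ℝ} (hc : 0 ≤ c) :
    postV π g (c • C) = c * postV π g C := by
  simp only [postV, mul_sum, mul₀_sup' hc]
  refine sum_congr rfl fun y _ => sup'_congr _ rfl fun w _ => ?_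
  simp only [Pi.smul_apply, smul_eq_mul, mul_assoc]

theorem postV_add_le (π : X → ℝ) (g : W → X → ℝ) (C D : X → Y → ℝ) :
    postV π g (C + D) ≤ postV π g C + postV π g D := by
  rw [postV, postV, postV, ← sum_add_distrib]
  refine sum_le_sum fun y _ => sup'_le _ _ fun w hw => ?_
  calc ∑ x, (C + D) x y * π x * g w x
      = ∑ x, C x y * π x * g w x + ∑ x, D x y * π x * g w x := by
        simp only [Pi.add_apply, add_mul, sum_add_distrib]
    _ ≤ _ := add_le_add (le_sup' (fun w => ∑ x, C x y * π x * g w x) hw)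
        (le_sup' (fun w => ∑ x, D x y * π x * g w x) hw)

theorem postV_mono {π : X → ℝ} {g : W → X → ℝ} (hπ : ∀ x, 0 ≤ π x)
    (hg : ∀ w x, 0 ≤ g w x) {C D : X → Y → ℝ} (hCD : C ≤ D) :
    postV π g C ≤ postV π g D :=
  sum_le_sum fun y _ => sup'_mono_fun fun w _ =>
    sum_le_sum fun x _ =>
      mul_le_mul_of_nonneg_right (mul_le_mul_of_nonneg_right (hCD x y) (hπ x)) (hg w x)

end PostVulnerability

theorem hid_eq_smul_add_smul {X Ω : Type*} (p : ℝ) (C₁ C₂ : X → Ω → ℝ) :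
    hid p C₁ C₂ = p • C₁ + (1 - p) • C₂ :=
  rfl

theorem vulnerability_bounds_hidden_choice {W X Ω : Type*}
    [Fintype W] [Nonempty W] [Fintype X] [Fintype Ω]
    (Y₁ Y₂ : Finset Ω) (C₁ C₂ : X → Ω → ℝ)
    (h₁ : IsChannelOn Y₁ C₁) (h₂ : IsChannelOn Y₂ C₂)
    (π : X → ℝ) (hπ : IsPrior π) (g : W → X → ℝ) (hg : IsGain g)
    (p : ℝ) (hp : p ∈ Set.Icc (0:ℝ) 1) :
    max (p * postV π g C₁) ((1 - p) * postV π g C₂) ≤ postV π g (hid p C₁ C₂) ∧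
    postV π g (hid p C₁ C₂) ≤ p * postV π g C₁ + (1 - p) * postV π g C₂ := by
  obtain ⟨hp0, hp1⟩ := hp
  have hq0 : 0 ≤ 1 - p := sub_nonneg.mpr hp1
  have hg0 : ∀ w x, 0 ≤ g w x := fun w x => (hg w x).1
  refine ⟨max_le ?_ ?_, ?_⟩
  · rw [← postV_smul π g C₁ hp0]
    exact postV_mono hπ.1 hg0 fun x y => le_add_of_nonneg_right (mul_nonneg hq0 (h₂.1 x y))
  · rw [← postV_smul π g C₂ hq0]
    exact postV_mono hπ.1 hg0 fun x y => le_add_of_nonneg_left (mul_nonneg hp0 (h₁.1 x y))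
  · rw [hid_eq_smul_add_smul, ← postV_smul π g C₁ hp0, ← postV_smul π g C₂ hq0]
    exact postV_add_le π g _ _
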